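/- The map δ ↦ σ·(e^b - e^{b-δ})/((e^b - 1)·ϕ(Φ⁻¹((e^{b-δ}-1)/(e^b-1)))) is strictly increasing on (δ_th, b), where δ_th = b - log((e^b + 1)/2); consequently G'(δ) = φ(δ)·[1 - this quantity] changes sign at most once on (δ_th, b). -/

import Mathlib

/-!
With `p δ = (e^{b-δ} - 1) / (e^b - 1)` one has `e^b - e^{b-δ} = (e^b - 1) (1 - p δ)`, so the
quantity is `σ (1 - p) / ϕ (Φ⁻¹ p)` evaluated at `p = p δ`. On `(δ_th, b)` the level `p δ` decreases
inside `(0, 1/2)`, where `Φ⁻¹ p < 0`; as `p` grows, `1 - p` falls while `ϕ (Φ⁻¹ p)` rises (`ϕ` is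
increasing on `(-∞, 0]`), so the quantity is strictly decreasing in `p`, i.e. increasing in `δ`.
Since `φ > 0`, `G'` has the sign of `1 - quantity`, and once this is `≤ 0` it stays `< 0`.
-/

open Real Set

/-- Standard normal density. -/
noncomputable def stdPdf (x : ℝ) : ℝ := (Real.sqrt (2 * Real.pi))⁻¹ * Real.exp (-x ^ 2 / 2)

/-- Standard normal CDF. -/
noncomputable def stdCdf (x : ℝ) : ℝ := ∫ t in Set.Iic x, stdPdf t

/-- Inverse of the standard normal CDF. -/
noncomputable def stdCdfInv : ℝ → ℝ := Function.invFun stdCdf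

noncomputable def d1 (N F σ δ : ℝ) : ℝ := (Real.log (N / (F * Real.exp δ)) + σ ^ 2 / 2) / σ

noncomputable def d2 (N F σ δ : ℝ) : ℝ := d1 N F σ δ - σ

/-- Expected collateral shortfall P(F, δ). -/
noncomputable def Pshort (N σ F δ : ℝ) : ℝ :=
  F * Real.exp δ * stdCdf (-(d2 N F σ δ)) - N * stdCdf (-(d1 N F σ δ))

/-- Vault payoff V(F, δ). -/
noncomputable def Vval (N σ b F δ : ℝ) : ℝ :=
  N * Real.exp (σ ^ 2 / 2) + F * (Real.exp b - Real.exp δ)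
    - Pshort N σ F δ * (Real.exp b - 1)

/-- Unconstrained optimal issuance φ(δ). -/
noncomputable def phiIss (N σ b δ : ℝ) : ℝ :=
  N * Real.exp (σ * stdCdfInv ((Real.exp (b - δ) - 1) / (Real.exp b - 1)) - δ - σ ^ 2 / 2)

open MeasureTheory ProbabilityTheory Filter Topology

lemma stdPdf_eq_gaussianPDFReal : stdPdf = gaussianPDFReal 0 1 := by
  funext x
  simp [stdPdf, gaussianPDFReal]

lemma stdPdf_pos (x : ℝ) : 0 < stdPdf x := by
  rw [stdPdf_eq_gaussianPDFReal]
  exact gaussianPDFReal_pos 0 1 x one_ne_zero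

lemma integrable_stdPdf : Integrable stdPdf := by
  rw [stdPdf_eq_gaussianPDFReal]
  exact integrable_gaussianPDFReal 0 1

lemma stdPdf_neg (x : ℝ) : stdPdf (-x) = stdPdf x := by
  simp [stdPdf]

lemma strictMonoOn_stdPdf : StrictMonoOn stdPdf (Iic 0) := by
  intro x hx y hy hxy
  unfold stdPdf
  gcongr ?_ * rexp ?_
  nlinarith [mem_Iic.mp hy]

lemma stdCdf_eq_cdf_gaussianReal : stdCdf = cdf (gaussianReal 0 1) := by
  funext x
  rw [cdf_eq_real, measureReal_def, gaussianReal_apply_eq_integral 0 one_ne_zero,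
    ENNReal.toReal_ofReal (setIntegral_nonneg measurableSet_Iic fun t _ =>
      gaussianPDFReal_nonneg 0 1 t), stdCdf, stdPdf_eq_gaussianPDFReal]

lemma stdCdf_sub_stdCdf (a c : ℝ) : stdCdf c - stdCdf a = ∫ t in a..c, stdPdf t :=
  intervalIntegral.integral_Iic_sub_Iic integrable_stdPdf.integrableOn
    integrable_stdPdf.integrableOn

lemma strictMono_stdCdf : StrictMono stdCdf := by
  intro a c hac
  have := intervalIntegral.intervalIntegral_pos_of_pos integrable_stdPdf.intervalIntegrable
    stdPdf_pos hac
  linarith [stdCdf_sub_stdCdf a c]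

lemma continuous_stdCdf : Continuous stdCdf := by
  have : stdCdf = fun x => stdCdf 0 + ∫ t in (0 : ℝ)..x, stdPdf t := by
    funext x
    rw [← stdCdf_sub_stdCdf]
    ring
  rw [this]
  exact continuous_const.add
    (intervalIntegral.continuous_primitive (fun _ _ => integrable_stdPdf.intervalIntegrable) 0)

lemma stdCdf_zero : stdCdf 0 = 1 / 2 := by
  have hsymm : ∫ x in Iic (0 : ℝ), stdPdf x = ∫ x in Ioi (0 : ℝ), stdPdf x := by
    simpa only [stdPdf_neg, neg_zero] using integral_comp_neg_Iic 0 stdPdf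
  have htotal := intervalIntegral.integral_Iic_add_Ioi (b := 0) integrable_stdPdf.integrableOn
    integrable_stdPdf.integrableOn
  rw [stdPdf_eq_gaussianPDFReal, integral_gaussianPDFReal_eq_one 0 one_ne_zero,
    ← stdPdf_eq_gaussianPDFReal] at htotal
  rw [stdCdf]
  linarith

lemma tendsto_stdCdf_atBot : Tendsto stdCdf atBot (𝓝 0) := by
  rw [stdCdf_eq_cdf_gaussianReal]
  exact tendsto_cdf_atBot _

lemma tendsto_stdCdf_atTop : Tendsto stdCdf atTop (𝓝 1) := by
  rw [stdCdf_eq_cdf_gaussianReal]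
  exact tendsto_cdf_atTop _

lemma surjOn_stdCdf : SurjOn stdCdf univ (Ioo 0 1) := by
  rintro p ⟨hp0, hp1⟩
  obtain ⟨a, ha⟩ := (tendsto_stdCdf_atBot.eventually_lt_const hp0).exists
  obtain ⟨c, hc⟩ := (tendsto_stdCdf_atTop.eventually_const_lt hp1).exists
  have hac : a ≤ c := strictMono_stdCdf.le_iff_le.mp (by linarith)
  obtain ⟨x, -, hx⟩ := intermediate_value_Icc hac continuous_stdCdf.continuousOn ⟨ha.le, hc.le⟩
  exact ⟨x, mem_univ x, hx⟩

lemma stdCdf_stdCdfInv {p : ℝ} (hp : p ∈ Ioo 0 1) : stdCdf (stdCdfInv p) = p := by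
  obtain ⟨x, -, hx⟩ := surjOn_stdCdf hp
  exact Function.invFun_eq ⟨x, hx⟩

lemma strictMonoOn_stdCdfInv : StrictMonoOn stdCdfInv (Ioo 0 1) := by
  intro p hp q hq hpq
  rw [← strictMono_stdCdf.lt_iff_lt, stdCdf_stdCdfInv hp, stdCdf_stdCdfInv hq]
  exact hpq

lemma stdCdfInv_neg {p : ℝ} (hp : p ∈ Ioo 0 (1 / 2)) : stdCdfInv p < 0 := by
  rw [← strictMono_stdCdf.lt_iff_lt, stdCdf_stdCdfInv ⟨hp.1, by linarith [hp.2]⟩, stdCdf_zero]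
  exact hp.2

lemma strictAntiOn_mul_one_sub_div_stdPdf_stdCdfInv {σ : ℝ} (hσ : 0 < σ) :
    StrictAntiOn (fun p => σ * (1 - p) / stdPdf (stdCdfInv p)) (Ioo 0 (1 / 2)) := by
  intro p hp q hq hpq
  have hp' : p ∈ Ioo 0 1 := ⟨hp.1, by linarith [hp.2]⟩
  have hq' : q ∈ Ioo 0 1 := ⟨hq.1, by linarith [hq.2]⟩
  have hpdf : stdPdf (stdCdfInv p) < stdPdf (stdCdfInv q) :=
    strictMonoOn_stdPdf (stdCdfInv_neg hp).le (stdCdfInv_neg hq).le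
      (strictMonoOn_stdCdfInv hp' hq' hpq)
  have hpos : 0 < σ * (1 - q) := mul_pos hσ (by linarith [hq'.2])
  calc σ * (1 - q) / stdPdf (stdCdfInv q)
      < σ * (1 - q) / stdPdf (stdCdfInv p) := div_lt_div_of_pos_left hpos (stdPdf_pos _) hpdf
    _ < σ * (1 - p) / stdPdf (stdCdfInv p) := by gcongr; exact stdPdf_pos _

section

variable {b : ℝ}

lemma strictAnti_exp_sub_sub_one_div (hb : 0 < b) :
    StrictAnti fun δ => (exp (b - δ) - 1) / (exp b - 1) := by
  intro δ₁ δ₂ h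
  have : 0 < exp b - 1 := by linarith [one_lt_exp_iff.mpr hb]
  dsimp only
  gcongr

lemma exp_sub_sub_one_div_mem_Ioo (hb : 0 < b) {δ : ℝ}
    (hδ : δ ∈ Ioo (b - log ((exp b + 1) / 2)) b) :
    (exp (b - δ) - 1) / (exp b - 1) ∈ Ioo 0 (1 / 2) := by
  have heb : 1 < exp b := one_lt_exp_iff.mpr hb
  have hlevel : exp (b - δ) < (exp b + 1) / 2 := by
    rw [← exp_log (by linarith : (0 : ℝ) < (exp b + 1) / 2)]
    exact exp_lt_exp.mpr (by linarith [hδ.1])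
  have hpos : 1 < exp (b - δ) := one_lt_exp_iff.mpr (by linarith [hδ.2])
  constructor
  · exact div_pos (by linarith) (by linarith)
  · rw [div_lt_iff₀ (by linarith)]
    linarith

lemma mul_exp_sub_exp_sub_div (σ y δ : ℝ) (hb : b ≠ 0) :
    σ * (exp b - exp (b - δ)) / ((exp b - 1) * y) =
      σ * (1 - (exp (b - δ) - 1) / (exp b - 1)) / y := by
  have : exp b - 1 ≠ 0 := sub_ne_zero.mpr (mt (exp_eq_one_iff b).mp hb)
  field_simp
  ring

end

lemma phiIss_pos {N : ℝ} (hN : 0 < N) (σ b δ : ℝ) : 0 < phiIss N σ b δ :=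
  mul_pos hN (exp_pos _)

theorem stmt13 (σ b : ℝ) (hσ : 0 < σ) (hb : 0 < b) (N : ℝ) (hN : 0 < N) :
    StrictMonoOn
      (fun δ => σ * (Real.exp b - Real.exp (b - δ)) /
        ((Real.exp b - 1) *
          stdPdf (stdCdfInv ((Real.exp (b - δ) - 1) / (Real.exp b - 1)))))
      (Set.Ioo (b - Real.log ((Real.exp b + 1) / 2)) b) ∧
    ∀ δ₁ ∈ Set.Ioo (b - Real.log ((Real.exp b + 1) / 2)) b,
      ∀ δ₂ ∈ Set.Ioo (b - Real.log ((Real.exp b + 1) / 2)) b, δ₁ < δ₂ →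
        phiIss N σ b δ₁ *
          (1 - σ * (Real.exp b - Real.exp (b - δ₁)) /
            ((Real.exp b - 1) *
              stdPdf (stdCdfInv ((Real.exp (b - δ₁) - 1) / (Real.exp b - 1))))) ≤ 0 →
        phiIss N σ b δ₂ *
          (1 - σ * (Real.exp b - Real.exp (b - δ₂)) /
            ((Real.exp b - 1) *
              stdPdf (stdCdfInv ((Real.exp (b - δ₂) - 1) / (Real.exp b - 1))))) < 0 := by
  have hmono : StrictMonoOn
      (fun δ => σ * (Real.exp b - Real.exp (b - δ)) /
        ((Real.exp b - 1) *
          stdPdf (stdCdfInv ((Real.exp (b - δ) - 1) / (Real.exp b - 1)))))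
      (Set.Ioo (b - Real.log ((Real.exp b + 1) / 2)) b) := by
    simp only [mul_exp_sub_exp_sub_div σ _ _ hb.ne']
    exact (strictAntiOn_mul_one_sub_div_stdPdf_stdCdfInv hσ).comp
      ((strictAnti_exp_sub_sub_one_div hb).strictAntiOn _)
      fun δ hδ => exp_sub_sub_one_div_mem_Ioo hb hδ
  refine ⟨hmono, fun δ₁ h₁ δ₂ h₂ h12 hG₁ => ?_⟩
  have hcross : (1 : ℝ) ≤ _ := sub_nonpos.mp (nonpos_of_mul_nonpos_right hG₁ (phiIss_pos hN σ b δ₁))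
  exact mul_neg_of_pos_of_neg (phiIss_pos hN σ b δ₂) (sub_neg.mpr (hcross.trans_lt (hmono h₁ h₂ h12)))
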